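/- Let F : ℝ^p → ℝ be bounded below with locally Lipschitz gradient and let x_{k+1} = x_k − M_k ∇F(x_k) with M_k symmetric positive definite satisfying ∑ λ_min(M_k) = ∞ and ∑ λ_max(M_k)^q < ∞ for some q > 1. If all iterates remain in a set U ⊂ ℝ^p whose closure contains no stationary point of F, then the conclusion of the convergence theorem forces a contradiction; i.e., the iterates cannot remain forever in a bounded set containing no stationary points. -/

import Mathlib

/-!
On the compact convex set `K = closure (convexHull U)` the gradient is `L`-Lipschitz, and by
compactness of `closure U` its norm along the iterates is bounded below by some `ε > 0`.
Summability of `λ_max(M_k)^q` forces `λ_max(M_k) → 0`, so eventually `L λ_max(M_k) ≤ 1/2`,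
and the descent lemma then gives `F(x_{k+1}) ≤ F(x_k) - ε² λ_min(M_k) / 2`. Summing, the
divergence of `∑ λ_min(M_k)` would push `F` below its lower bound.
-/

open Filter

/-- Smallest eigenvalue of a Hermitian real matrix. -/
noncomputable def lamMin {p : ℕ} [NeZero p] {M : Matrix (Fin p) (Fin p) ℝ}
    (hM : M.IsHermitian) : ℝ :=
  Finset.univ.inf' Finset.univ_nonempty hM.eigenvalues

/-- Largest eigenvalue of a Hermitian real matrix. -/
noncomputable def lamMax {p : ℕ} [NeZero p] {M : Matrix (Fin p) (Fin p) ℝ}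
    (hM : M.IsHermitian) : ℝ :=
  Finset.univ.sup' Finset.univ_nonempty hM.eigenvalues

open RealInnerProductSpace
open scoped NNReal Topology

namespace Matrix.IsHermitian

variable {n : Type*} [Fintype n] [DecidableEq n] {A : Matrix n n ℝ} (hA : A.IsHermitian)

lemma eigenvectorBasis_repr_toEuclideanLin (v : EuclideanSpace ℝ n) (i : n) :
    hA.eigenvectorBasis.repr (A.toEuclideanLin v) i =
      hA.eigenvalues i * hA.eigenvectorBasis.repr v i := by
  have hvec : A.toEuclideanLin (hA.eigenvectorBasis i) =
      hA.eigenvalues i • hA.eigenvectorBasis i := by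
    ext j
    simpa using congrFun (hA.mulVec_eigenvectorBasis i) j
  rw [OrthonormalBasis.repr_apply_apply, OrthonormalBasis.repr_apply_apply,
    ← isSymmetric_toEuclideanLin_iff.2 hA, hvec, real_inner_smul_left]

lemma inner_toEuclideanLin_eq_sum (v : EuclideanSpace ℝ n) :
    ⟪v, A.toEuclideanLin v⟫ =
      ∑ i, hA.eigenvalues i * hA.eigenvectorBasis.repr v i ^ 2 := by
  rw [← hA.eigenvectorBasis.repr.inner_map_map, PiLp.inner_apply]
  refine Finset.sum_congr rfl fun i _ => ?_
  rw [eigenvectorBasis_repr_toEuclideanLin, RCLike.inner_apply, conj_trivial]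
  ring

lemma norm_toEuclideanLin_sq_eq_sum (v : EuclideanSpace ℝ n) :
    ‖A.toEuclideanLin v‖ ^ 2 =
      ∑ i, hA.eigenvalues i ^ 2 * hA.eigenvectorBasis.repr v i ^ 2 := by
  rw [← hA.eigenvectorBasis.repr.norm_map, EuclideanSpace.real_norm_sq_eq]
  simp only [eigenvectorBasis_repr_toEuclideanLin, mul_pow]

lemma mul_norm_sq_le_inner_toEuclideanLin {c : ℝ} (hc : ∀ i, c ≤ hA.eigenvalues i)
    (v : EuclideanSpace ℝ n) : c * ‖v‖ ^ 2 ≤ ⟪v, A.toEuclideanLin v⟫ := by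
  rw [hA.inner_toEuclideanLin_eq_sum, ← hA.eigenvectorBasis.repr.norm_map,
    EuclideanSpace.real_norm_sq_eq, Finset.mul_sum]
  exact Finset.sum_le_sum fun i _ => mul_le_mul_of_nonneg_right (hc i) (sq_nonneg _)

lemma norm_toEuclideanLin_sq_le {c : ℝ} (h0 : ∀ i, 0 ≤ hA.eigenvalues i)
    (hc : ∀ i, hA.eigenvalues i ≤ c) (v : EuclideanSpace ℝ n) :
    ‖A.toEuclideanLin v‖ ^ 2 ≤ c * ⟪v, A.toEuclideanLin v⟫ := by
  rw [hA.inner_toEuclideanLin_eq_sum, hA.norm_toEuclideanLin_sq_eq_sum, Finset.mul_sum]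
  refine Finset.sum_le_sum fun i _ => ?_
  rw [pow_two (hA.eigenvalues i), mul_assoc]
  exact mul_le_mul_of_nonneg_right (hc i) (mul_nonneg (h0 i) (sq_nonneg _))

end Matrix.IsHermitian

section Descent

variable {E : Type*} [NormedAddCommGroup E] [InnerProductSpace ℝ E] [CompleteSpace E]
  {f : E → ℝ} {K : Set E} {L : ℝ≥0} {a b : E}

lemma le_add_inner_gradient_add_mul_norm_sq (hf : ∀ x ∈ K, DifferentiableAt ℝ f x)
    (hK : Convex ℝ K) (hL : LipschitzOnWith L (gradient f) K) (ha : a ∈ K) (hb : b ∈ K) :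
    f b ≤ f a + ⟪gradient f a, b - a⟫ + L * ‖b - a‖ ^ 2 := by
  -- The mean value inequality on `K ∩ closedBall a ‖b - a‖` yields `L` instead of the
  -- sharp `L / 2`.
  set s := K ∩ Metric.closedBall a ‖b - a‖
  have hbound : ∀ z ∈ s, ‖fderiv ℝ f z - fderiv ℝ f a‖ ≤ L * ‖b - a‖ := by
    rintro z ⟨hzK, hz⟩
    rw [← toDual_gradient, ← toDual_gradient, ← map_sub, LinearIsometryEquiv.norm_map]
    calc ‖gradient f z - gradient f a‖ ≤ L * ‖z - a‖ := hL.norm_sub_le hzK ha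
      _ ≤ L * ‖b - a‖ := by gcongr; rwa [← dist_eq_norm]
  have hmvt := (hK.inter (convex_closedBall a ‖b - a‖)).norm_image_sub_le_of_norm_fderiv_le'
    (fun z hz => hf z hz.1) hbound ⟨ha, Metric.mem_closedBall_self (norm_nonneg _)⟩
    ⟨hb, by rw [Metric.mem_closedBall, dist_eq_norm]⟩
  rw [← toDual_gradient, InnerProductSpace.toDual_apply_apply, Real.norm_eq_abs,
    abs_le] at hmvt
  rw [sq, ← mul_assoc]
  linarith [hmvt.2]

lemma le_sub_half_inner_gradient (hf : ∀ x ∈ K, DifferentiableAt ℝ f x)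
    (hK : Convex ℝ K) (hL : LipschitzOnWith L (gradient f) K) (ha : a ∈ K) (hb : b ∈ K)
    {c : ℝ} (hc : L * c ≤ 1 / 2) (hstep : ‖a - b‖ ^ 2 ≤ c * ⟪gradient f a, a - b⟫)
    (hdescent : 0 ≤ ⟪gradient f a, a - b⟫) :
    f b ≤ f a - ⟪gradient f a, a - b⟫ / 2 := by
  have h := le_add_inner_gradient_add_mul_norm_sq hf hK hL ha hb
  rw [← neg_sub a b, inner_neg_right, norm_neg] at h
  have : (L : ℝ) * ‖a - b‖ ^ 2 ≤ ⟪gradient f a, a - b⟫ / 2 := by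
    calc (L : ℝ) * ‖a - b‖ ^ 2 ≤ L * (c * ⟪gradient f a, a - b⟫) := by gcongr
      _ = L * c * ⟪gradient f a, a - b⟫ := by ring
      _ ≤ 1 / 2 * ⟪gradient f a, a - b⟫ := by gcongr
      _ = ⟪gradient f a, a - b⟫ / 2 := by ring
  linarith

end Descent

section Eigenvalues

variable {p : ℕ} [NeZero p] {M : Matrix (Fin p) (Fin p) ℝ}

lemma lamMin_le_eigenvalues (hM : M.IsHermitian) (i : Fin p) : lamMin hM ≤ hM.eigenvalues i :=
  Finset.inf'_le _ (Finset.mem_univ i)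

lemma eigenvalues_le_lamMax (hM : M.IsHermitian) (i : Fin p) : hM.eigenvalues i ≤ lamMax hM :=
  Finset.le_sup' _ (Finset.mem_univ i)

lemma lamMin_pos (hM : M.PosDef) : 0 < lamMin hM.1 :=
  (Finset.lt_inf'_iff _).2 fun i _ => hM.eigenvalues_pos i

lemma lamMax_pos (hM : M.PosDef) : 0 < lamMax hM.1 :=
  (lamMin_pos hM).trans_le
    ((lamMin_le_eigenvalues hM.1 0).trans (eigenvalues_le_lamMax hM.1 0))

lemma le_sub_lamMin_mul_norm_gradient_sq {f : EuclideanSpace ℝ (Fin p) → ℝ}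
    {K : Set (EuclideanSpace ℝ (Fin p))} {L : ℝ≥0} (hf : ∀ x ∈ K, DifferentiableAt ℝ f x)
    (hK : Convex ℝ K) (hL : LipschitzOnWith L (gradient f) K) (hM : M.PosDef)
    {a : EuclideanSpace ℝ (Fin p)} (ha : a ∈ K)
    (hb : a - M.toEuclideanLin (gradient f a) ∈ K)
    (hML : L * lamMax hM.1 ≤ 1 / 2) :
    f (a - M.toEuclideanLin (gradient f a)) ≤
      f a - lamMin hM.1 * ‖gradient f a‖ ^ 2 / 2 := by
  set g := gradient f a
  have hmin : lamMin hM.1 * ‖g‖ ^ 2 ≤ ⟪g, M.toEuclideanLin g⟫ :=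
    hM.1.mul_norm_sq_le_inner_toEuclideanLin (lamMin_le_eigenvalues hM.1) g
  have hmax : ‖M.toEuclideanLin g‖ ^ 2 ≤ lamMax hM.1 * ⟪g, M.toEuclideanLin g⟫ :=
    hM.1.norm_toEuclideanLin_sq_le (fun i => (hM.eigenvalues_pos i).le)
      (eigenvalues_le_lamMax hM.1) g
  have hdescent : 0 ≤ ⟪g, M.toEuclideanLin g⟫ :=
    (mul_nonneg (lamMin_pos hM).le (sq_nonneg _)).trans hmin
  have h := le_sub_half_inner_gradient hf hK hL ha hb hML (by rwa [sub_sub_cancel])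
    (by rwa [sub_sub_cancel])
  rw [sub_sub_cancel] at h
  linarith

end Eigenvalues

lemma tendsto_zero_of_summable_rpow {a : ℕ → ℝ} (ha : ∀ k, 0 ≤ a k) {q : ℝ} (hq : 0 < q)
    (h : Summable fun k => a k ^ q) : Tendsto a atTop (𝓝 0) := by
  have := h.tendsto_atTop_zero.rpow_const (p := q⁻¹) (Or.inr (inv_nonneg.2 hq.le))
  rw [Real.zero_rpow (inv_ne_zero hq.ne')] at this
  simpa only [Real.rpow_rpow_inv (ha _) hq.ne'] using this

lemma not_tendsto_atTop_sum_of_eventually_add_le {u w : ℕ → ℝ} {B : ℝ} (hB : ∀ k, B ≤ u k)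
    (h : ∀ᶠ k in atTop, u (k + 1) + w k ≤ u k) :
    ¬ Tendsto (fun n => ∑ k ∈ Finset.range n, w k) atTop atTop := by
  obtain ⟨N, hN⟩ := eventually_atTop.1 h
  have hS : ∀ n ≥ N, u n + ∑ k ∈ Finset.range n, w k ≤ u N + ∑ k ∈ Finset.range N, w k := by
    intro n hn
    induction n, hn using Nat.le_induction with
    | base => exact le_rfl
    | succ n hn ih => rw [Finset.sum_range_succ]; linarith [hN n hn]
  intro htop
  obtain ⟨n, hn, hnN⟩ := ((htop.eventually_gt_atTop
    (u N + ∑ k ∈ Finset.range N, w k - B)).and (eventually_ge_atTop N)).exists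
  linarith [hS n hnN, hB n]

/-- Gradient descent with summable diminishing step sizes cannot remain forever in a
bounded set whose closure contains no stationary point of `F`. -/
theorem no_iterates_in_bounded_set_without_stationary_points {p : ℕ} [NeZero p]
    (F : EuclideanSpace ℝ (Fin p) → ℝ) (F_lb : ℝ)
    (hbd : ∀ x, F_lb ≤ F x)
    (hdiff : Differentiable ℝ F)
    (hlip : ∀ K : Set (EuclideanSpace ℝ (Fin p)), IsCompact K →
      ∃ L : ℝ, 0 ≤ L ∧ ∀ x ∈ K, ∀ y ∈ K, ‖gradient F x - gradient F y‖ ≤ L * ‖x - y‖)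
    (M : ℕ → Matrix (Fin p) (Fin p) ℝ)
    (hM : ∀ k, (M k).PosDef)
    (hdiv : Tendsto (fun n => ∑ k ∈ Finset.range n, lamMin (hM k).1) atTop atTop)
    (hsum : ∃ q : ℝ, 1 < q ∧ Summable (fun k => lamMax (hM k).1 ^ q))
    (x : ℕ → EuclideanSpace ℝ (Fin p))
    (hx : ∀ k, x (k + 1) = x k - (M k).toEuclideanLin (gradient F (x k)))
    (U : Set (EuclideanSpace ℝ (Fin p)))
    (hU : Bornology.IsBounded U)
    (hno : ∀ z ∈ closure U, gradient F z ≠ 0)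
    (hin : ∀ k, x k ∈ U) :
    False := by
  obtain ⟨q, hq, hsum⟩ := hsum
  set K := closure (convexHull ℝ U)
  have hUK : U ⊆ K := (subset_convexHull ℝ U).trans subset_closure
  obtain ⟨L, -, hL⟩ := hlip K (isBounded_convexHull.2 hU).isCompact_closure
  have hLK : LipschitzOnWith L.toNNReal (gradient F) K :=
    LipschitzOnWith.of_dist_le' fun a ha b hb => by simpa only [dist_eq_norm] using hL a ha b hb
  obtain ⟨ε, hε, hεU⟩ := hU.isCompact_closure.exists_forall_le'
    (hLK.continuousOn.mono (closure_mono (subset_convexHull ℝ U))).norm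
    fun z hz => norm_pos_iff.2 (hno z hz)
  have hsmall : ∀ᶠ k in atTop, (L.toNNReal : ℝ) * lamMax (hM k).1 < 1 / 2 := by
    have := (tendsto_zero_of_summable_rpow (fun k => (lamMax_pos (hM k)).le) (by linarith)
      hsum).const_mul (L.toNNReal : ℝ)
    rw [mul_zero] at this
    exact this.eventually_lt_const (by norm_num)
  refine not_tendsto_atTop_sum_of_eventually_add_le (u := fun k => F (x k))
    (w := fun k => ε ^ 2 / 2 * lamMin (hM k).1) (fun k => hbd (x k)) ?_ ?_
  · filter_upwards [hsmall] with k hk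
    have hstep := le_sub_lamMin_mul_norm_gradient_sq (fun z _ => hdiff z)
      (convex_convexHull ℝ U).closure hLK (hM k) (hUK (hin k)) (hx k ▸ hUK (hin (k + 1))) hk.le
    rw [← hx k] at hstep
    have hεk : ε ^ 2 ≤ ‖gradient F (x k)‖ ^ 2 :=
      pow_le_pow_left₀ hε.le (hεU _ (subset_closure (hin k))) 2
    linarith [mul_le_mul_of_nonneg_left hεk (lamMin_pos (hM k)).le]
  · simpa only [← Finset.mul_sum] using hdiv.const_mul_atTop (by positivity : 0 < ε ^ 2 / 2)
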